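/- Fix l ≥ 2. The number of lattice paths from (0,0) to (M,N) with steps (1,1) and (-1,1) confined to the strip 0 ≤ x ≤ l-2 (left wall at x=0 and right wall at x=l-2) equals F(M,N) + Σ_{k=1}^{⌊N/(2l)+1/2⌋} F(M-2kl, N) + Σ_{k=1}^{⌊N/(2l)⌋} F(M+2kl, N), where F(m,n) = binom(n,(n-m)/2) - binom(n,(n-m)/2 - 1), for 0 ≤ M ≤ l-2 and N ≡ M mod 2. -/
import Mathlib

open Finset

/-- The x-coordinate after the first `k` steps of a path encoded by `s : Fin N → Bool`
(`true` = step `(x,y) → (x+1,y+1)`, `false` = step `(x,y) → (x-1,y+1)`), starting at `x = 0`. -/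
def pathPos {N : ℕ} (s : Fin N → Bool) (k : ℕ) : ℤ :=
  ∑ i ∈ Finset.univ.filter (fun i : Fin N => (i : ℕ) < k), (if s i then (1 : ℤ) else -1)

/-- Binomial coefficient `binom n k` with integer lower argument, `0` out of range. -/
def ibinom (n : ℕ) (k : ℤ) : ℤ :=
  if 0 ≤ k then (n.choose k.toNat : ℤ) else 0


/-- `F m n = binom n ((n-m)/2) - binom n ((n-m)/2 - 1)`, the number of nonnegative paths. -/
def F (m : ℤ) (n : ℕ) : ℤ :=
  ibinom n (((n : ℤ) - m) / 2) - ibinom n (((n : ℤ) - m) / 2 - 1)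

lemma pathPos_stable {N : ℕ} (s : Fin N → Bool) {k : ℕ} (h : N ≤ k) :
    pathPos s k = pathPos s N := by
  unfold pathPos; congr 1
  apply Finset.filter_congr
  intro i _
  simp [i.isLt, lt_of_lt_of_le i.isLt h]

lemma pathPos_snoc {N : ℕ} (s : Fin N → Bool) (b : Bool) (k : ℕ) :
    pathPos (Fin.snoc s b) k
      = pathPos s k + (if N < k then (if b then (1:ℤ) else -1) else 0) := by
  unfold pathPos
  rw [Finset.sum_filter, Finset.sum_filter, Fin.sum_univ_castSucc]
  simp [Fin.snoc_castSucc, Fin.snoc_last]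

open scoped Classical in
noncomputable def Good (l N : ℕ) (m : ℤ) : Finset (Fin N → Bool) :=
  Finset.univ.filter
    (fun s => pathPos s N = m ∧ ∀ k : ℕ, 0 ≤ pathPos s k ∧ pathPos s k ≤ (l:ℤ) - 2)

lemma mem_Good {l N : ℕ} {m : ℤ} {s : Fin N → Bool} :
    s ∈ Good l N m ↔
      pathPos s N = m ∧ ∀ k : ℕ, 0 ≤ pathPos s k ∧ pathPos s k ≤ (l:ℤ) - 2 := by
  classical
  simp [Good]

lemma natCard_eq_good (l N : ℕ) (m : ℤ) :
    Nat.card {s : Fin N → Bool //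
      pathPos s N = m ∧ ∀ k : ℕ, 0 ≤ pathPos s k ∧ pathPos s k ≤ (l:ℤ) - 2}
      = (Good l N m).card := by
  classical
  rw [Nat.card_eq_fintype_card, Fintype.card_subtype]
  congr 1

lemma Good_empty {l N : ℕ} {m : ℤ} (h : ¬ (0 ≤ m ∧ m ≤ (l:ℤ)-2)) : Good l N m = ∅ := by
  ext s
  simp only [mem_Good, Finset.notMem_empty, iff_false, not_and]
  intro h1 h2
  exact h (h1 ▸ h2 N)

lemma Good_zero_card {l : ℕ} (hl : 2 ≤ l) (m : ℤ) :
    ((Good l 0 m).card : ℤ) = if m = 0 then 1 else 0 := by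
  have hp : ∀ (s : Fin 0 → Bool) (k : ℕ), pathPos s k = 0 := by
    intro s k; unfold pathPos; simp
  split_ifs with h
  · subst h
    have : Good l 0 0 = Finset.univ := by
      ext s
      simp only [mem_Good, Finset.mem_univ, iff_true, hp]
      have : (2:ℤ) ≤ (l:ℤ) := by exact_mod_cast hl
      exact ⟨by simp, fun k => ⟨by simp, by omega⟩⟩
    rw [this]
    simp
  · have : Good l 0 m = ∅ := by
      ext s
      simp only [mem_Good, Finset.notMem_empty, iff_false, not_and, hp]
      intro h0
      exact absurd h0.symm (by simpa using h)
    simp [this]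

lemma Good_succ_card {l N : ℕ} {m : ℤ} (hm : 0 ≤ m ∧ m ≤ (l:ℤ)-2) :
    (Good l (N+1) m).card = (Good l N (m-1)).card + (Good l N (m+1)).card := by
  classical
  have hinj : ∀ b : Bool, Function.Injective (fun s : Fin N → Bool => (Fin.snoc s b : Fin (N+1) → Bool)) := by
    intro b a a' h
    have := congrArg Fin.init h
    simpa [Fin.init_snoc] using this
  have hmem : ∀ (t : Fin N → Bool) (b : Bool),
      (@Fin.snoc N (fun _ => Bool) t b) ∈ Good l (N+1) m ↔ t ∈ Good l N (m - (if b then 1 else -1)) := by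
    intro t b
    simp only [mem_Good]
    constructor
    · rintro ⟨h1, h2⟩
      have hN : pathPos (Fin.snoc t b) (N+1) = pathPos t N + (if b then (1:ℤ) else -1) := by
        rw [pathPos_snoc, pathPos_stable t (Nat.le_succ N)]
        simp
      constructor
      · rw [hN] at h1; omega
      · intro k
        rcases le_or_gt k N with hk | hk
        · have := h2 k
          rwa [pathPos_snoc, if_neg (by omega), add_zero] at this
        · rw [pathPos_stable t (by omega : N ≤ k)]
          have := h2 N
          rwa [pathPos_snoc, if_neg (by omega), add_zero] at this
    · rintro ⟨h1, h2⟩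
      have hN : pathPos (Fin.snoc t b) (N+1) = pathPos t N + (if b then (1:ℤ) else -1) := by
        rw [pathPos_snoc, pathPos_stable t (Nat.le_succ N)]
        simp
      have h1' : pathPos (Fin.snoc t b) (N+1) = m := by rw [hN, h1]; ring
      refine ⟨h1', fun k => ?_⟩
      rcases le_or_gt k N with hk | hk
      · rw [pathPos_snoc, if_neg (by omega), add_zero]
        exact h2 k
      · rw [pathPos_stable (Fin.snoc t b) (by omega : N + 1 ≤ k), h1']
        exact hm
  have key : Good l (N+1) m
      = ((Good l N (m-1)).image (fun s : Fin N → Bool => (Fin.snoc s true : Fin (N+1) → Bool)))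
        ∪ ((Good l N (m+1)).image (fun s : Fin N → Bool => (Fin.snoc s false : Fin (N+1) → Bool))) := by
    ext s
    simp only [Finset.mem_union, Finset.mem_image]
    constructor
    · intro hs
      rcases Bool.eq_false_or_eq_true (s (Fin.last N)) with hb | hb
      · left
        refine ⟨Fin.init s, ?_, ?_⟩
        · have := (hmem (Fin.init s) true).mp (by rwa [← hb, Fin.snoc_init_self])
          simpa using this
        · rw [← hb, Fin.snoc_init_self]
      · right
        refine ⟨Fin.init s, ?_, ?_⟩
        · have := (hmem (Fin.init s) false).mp (by rwa [← hb, Fin.snoc_init_self])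
          simpa using this
        · rw [← hb, Fin.snoc_init_self]
    · rintro (⟨t, ht, rfl⟩ | ⟨t, ht, rfl⟩)
      · exact (hmem t true).mpr (by simpa using ht)
      · exact (hmem t false).mpr (by simpa using ht)
  rw [key, Finset.card_union_of_disjoint, Finset.card_image_of_injective _ (hinj true),
    Finset.card_image_of_injective _ (hinj false)]
  simp only [Finset.disjoint_left, Finset.mem_image]
  rintro s ⟨a, _, rfl⟩ ⟨a', _, h⟩
  have := congrFun h (Fin.last N)
  simp [Fin.snoc_last] at this

lemma ibinom_succ (n : ℕ) (j : ℤ) : ibinom (n+1) j = ibinom n j + ibinom n (j-1) := by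
  unfold ibinom
  rcases lt_trichotomy j 0 with h | h | h
  · rw [if_neg (by omega), if_neg (by omega), if_neg (by omega)]; ring
  · subst h; norm_num
  · obtain ⟨t, rfl⟩ : ∃ t : ℕ, j = (t:ℤ) + 1 := ⟨(j-1).toNat, by omega⟩
    rw [if_pos (by omega), if_pos (by omega), if_pos (by omega)]
    have h1 : ((t:ℤ)+1).toNat = t + 1 := by omega
    have h2 : ((t:ℤ)+1-1).toNat = t := by omega
    rw [h1, h2, Nat.choose_succ_succ]
    push_cast; ring

lemma ibinom_symm (n : ℕ) (j : ℤ) : ibinom n j = ibinom n ((n:ℤ) - j) := by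
  unfold ibinom
  rcases lt_trichotomy j 0 with h | h | h
  · rw [if_neg (by omega), if_pos (by omega), Nat.choose_eq_zero_of_lt (by omega)]
    simp
  · subst h; simp
  · rcases le_or_gt j n with h2 | h2
    · rw [if_pos (by omega), if_pos (by omega)]
      have e : ((n:ℤ) - j).toNat = n - j.toNat := by omega
      rw [e, Nat.choose_symm (by omega)]
    · rw [if_pos (by omega), if_neg (by omega), Nat.choose_eq_zero_of_lt (by omega)]
      simp

lemma F_rec (m : ℤ) (n : ℕ) (h : (2:ℤ) ∣ ((n:ℤ) + 1 - m)) :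
    F m (n+1) = F (m-1) n + F (m+1) n := by
  obtain ⟨j, hj⟩ := h
  unfold F
  have d1 : ((((n:ℕ)+1 : ℕ)):ℤ) = (n:ℤ) + 1 := by push_cast; ring
  rw [d1]
  have e1 : ((n:ℤ) + 1 - m)/2 = j := by omega
  have e2 : ((n:ℤ) - (m-1))/2 = j := by omega
  have e3 : ((n:ℤ) - (m+1))/2 = j - 1 := by omega
  rw [e1, e2, e3, ibinom_succ, ibinom_succ]
  ring

lemma F_reflect (m : ℤ) (n : ℕ) (h : (2:ℤ) ∣ ((n:ℤ) - m)) :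
    F (-2 - m) n = - F m n := by
  obtain ⟨j, hj⟩ := h
  unfold F
  have e0 : ((n:ℤ) - m)/2 = j := by omega
  have e1 : ((n:ℤ) - (-2 - m))/2 = (n:ℤ) - j + 1 := by omega
  rw [e0, e1, ibinom_symm n ((n:ℤ) - j + 1), ibinom_symm n ((n:ℤ) - j + 1 - 1)]
  have f1 : (n:ℤ) - ((n:ℤ) - j + 1) = j - 1 := by ring
  have f2 : (n:ℤ) - ((n:ℤ) - j + 1 - 1) = j := by ring
  rw [f1, f2]
  ring

lemma F_eq_zero {m : ℤ} {n : ℕ} (h : (2:ℤ) ∣ ((n:ℤ) - m))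
    (h2 : (n:ℤ) < m ∨ m < -(n:ℤ) - 2) : F m n = 0 := by
  obtain ⟨j, hj⟩ := h
  unfold F ibinom
  have e0 : ((n:ℤ) - m)/2 = j := by omega
  rw [e0]
  rcases h2 with h2 | h2
  · rw [if_neg (by omega), if_neg (by omega)]; ring
  · rw [if_pos (by omega), if_pos (by omega), Nat.choose_eq_zero_of_lt (by omega),
      Nat.choose_eq_zero_of_lt (by omega)]
    simp

/-- The reflection sum with both sums truncated at a common bound `B`. -/
def Sf (l : ℕ) (m : ℤ) (N B : ℕ) : ℤ :=
  F m N + (∑ k ∈ Finset.Icc 1 B, F (m - 2 * (k:ℤ) * (l:ℤ)) N)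
    + ∑ k ∈ Finset.Icc 1 B, F (m + 2 * (k:ℤ) * (l:ℤ)) N

lemma Sf_rec (l : ℕ) (m : ℤ) (N B : ℕ) (h : (2:ℤ) ∣ ((N:ℤ) + 1 - m)) :
    Sf l m (N+1) B = Sf l (m-1) N B + Sf l (m+1) N B := by
  obtain ⟨c, hc⟩ := h
  unfold Sf
  have h1 : ∀ k ∈ Finset.Icc 1 B, F (m - 2*(k:ℤ)*(l:ℤ)) (N+1)
      = F (m - 1 - 2*(k:ℤ)*(l:ℤ)) N + F (m + 1 - 2*(k:ℤ)*(l:ℤ)) N := by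
    intro k _
    have e := F_rec (m - 2*(k:ℤ)*(l:ℤ)) N ⟨c + (k:ℤ)*(l:ℤ), by linarith⟩
    have a1 : m - 2*(k:ℤ)*(l:ℤ) - 1 = m - 1 - 2*(k:ℤ)*(l:ℤ) := by ring
    have a2 : m - 2*(k:ℤ)*(l:ℤ) + 1 = m + 1 - 2*(k:ℤ)*(l:ℤ) := by ring
    rw [a1, a2] at e
    exact e
  have h2 : ∀ k ∈ Finset.Icc 1 B, F (m + 2*(k:ℤ)*(l:ℤ)) (N+1)
      = F (m - 1 + 2*(k:ℤ)*(l:ℤ)) N + F (m + 1 + 2*(k:ℤ)*(l:ℤ)) N := by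
    intro k _
    have e := F_rec (m + 2*(k:ℤ)*(l:ℤ)) N ⟨c - (k:ℤ)*(l:ℤ), by linarith⟩
    have a1 : m + 2*(k:ℤ)*(l:ℤ) - 1 = m - 1 + 2*(k:ℤ)*(l:ℤ) := by ring
    have a2 : m + 2*(k:ℤ)*(l:ℤ) + 1 = m + 1 + 2*(k:ℤ)*(l:ℤ) := by ring
    rw [a1, a2] at e
    exact e
  rw [F_rec m N ⟨c, hc⟩, Finset.sum_congr rfl h1, Finset.sum_congr rfl h2,
    Finset.sum_add_distrib, Finset.sum_add_distrib]
  ring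

lemma Sf_left (l : ℕ) (N B : ℕ) (h : (2:ℤ) ∣ ((N:ℤ) + 1)) : Sf l (-1) N B = 0 := by
  obtain ⟨c, hc⟩ := h
  have h0 : F (-1) N = 0 := by
    have e := F_reflect (-1) N ⟨c, by linarith⟩
    norm_num at e
    linarith
  have hk : ∀ k ∈ Finset.Icc 1 B, F ((-1:ℤ) - 2*(k:ℤ)*(l:ℤ)) N
      = - F ((-1:ℤ) + 2*(k:ℤ)*(l:ℤ)) N := by
    intro k _
    have e := F_reflect (-1 + 2*(k:ℤ)*(l:ℤ)) N ⟨c - (k:ℤ)*(l:ℤ), by linarith⟩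
    have a : (-2 - (-1 + 2*(k:ℤ)*(l:ℤ))) = -1 - 2*(k:ℤ)*(l:ℤ) := by ring
    rw [a] at e
    exact e
  unfold Sf
  rw [h0, Finset.sum_congr rfl hk, Finset.sum_neg_distrib]
  ring

lemma Sf_right (l : ℕ) (N B : ℕ) (hl : 2 ≤ l) (hB : N ≤ B)
    (h : (2:ℤ) ∣ ((N:ℤ) - ((l:ℤ) - 1))) : Sf l ((l:ℤ) - 1) N B = 0 := by
  obtain ⟨c, hc⟩ := h
  have hl' : (2:ℤ) ≤ (l:ℤ) := by exact_mod_cast hl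
  have hB' : (N:ℤ) ≤ (B:ℤ) := by exact_mod_cast hB
  set G : ℕ → ℤ := fun k => F ((l:ℤ) - 1 - 2*(k:ℤ)*(l:ℤ)) N with hG
  have hrefl : ∀ k : ℕ, F ((l:ℤ) - 1 + 2*(k:ℤ)*(l:ℤ)) N = - G (k+1) := by
    intro k
    have e := F_reflect ((l:ℤ) - 1 + 2*(k:ℤ)*(l:ℤ)) N ⟨c - (k:ℤ)*(l:ℤ), by linarith⟩
    have a : (-2 - ((l:ℤ) - 1 + 2*(k:ℤ)*(l:ℤ))) = (l:ℤ) - 1 - 2*(((k+1:ℕ)):ℤ)*(l:ℤ) := by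
      push_cast; ring
    rw [a] at e
    simp only [hG]
    linarith [e]
  have h1 : F ((l:ℤ) - 1) N = - G 1 := by
    have e := hrefl 0
    norm_num at e
    simpa using e
  have tele : ∀ C : ℕ, ∑ k ∈ Finset.Icc 1 C, (G k - G (k+1)) = G 1 - G (C+1) := by
    intro C
    induction C with
    | zero => simp
    | succ n ihn =>
      rw [Finset.sum_Icc_succ_top (by omega), ihn]
      ring
  have hGB : G (B+1) = 0 := by
    simp only [hG]
    apply F_eq_zero
    · refine ⟨c + ((B:ℤ)+1)*(l:ℤ), ?_⟩
      push_cast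
      linarith
    · right
      push_cast
      nlinarith
  unfold Sf
  rw [h1, Finset.sum_congr rfl (fun k _ => hrefl k), Finset.sum_neg_distrib]
  have expand : ∑ k ∈ Finset.Icc 1 B, G k - ∑ k ∈ Finset.Icc 1 B, G (k+1)
      = G 1 - G (B+1) := by
    rw [← Finset.sum_sub_distrib]
    exact tele B
  have : ∑ k ∈ Finset.Icc 1 B, G (k+1)
      = ∑ k ∈ Finset.Icc 1 B, G k - (G 1 - G (B+1)) := by linarith
  rw [this, hGB]
  ring

lemma Sf_zero (l : ℕ) (hl : 2 ≤ l) (m : ℤ) (B : ℕ) (hm1 : -1 ≤ m) (hm2 : m ≤ (l:ℤ) - 1)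
    (hpar : (2:ℤ) ∣ m) : Sf l m 0 B = if m = 0 then 1 else 0 := by
  have hl' : (2:ℤ) ≤ (l:ℤ) := by exact_mod_cast hl
  have z1 : ∀ k ∈ Finset.Icc 1 B, F (m - 2*(k:ℤ)*(l:ℤ)) 0 = 0 := by
    intro k hk
    have hk1 : 1 ≤ (k:ℤ) := by exact_mod_cast (Finset.mem_Icc.mp hk).1
    have hkl : 2*(l:ℤ) ≤ 2*(k:ℤ)*(l:ℤ) := by nlinarith
    apply F_eq_zero
    · obtain ⟨c, hc⟩ := hpar
      exact ⟨-c + (k:ℤ)*(l:ℤ), by push_cast; linarith⟩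
    · right; push_cast; linarith
  have z2 : ∀ k ∈ Finset.Icc 1 B, F (m + 2*(k:ℤ)*(l:ℤ)) 0 = 0 := by
    intro k hk
    have hk1 : 1 ≤ (k:ℤ) := by exact_mod_cast (Finset.mem_Icc.mp hk).1
    have hkl : 2*(l:ℤ) ≤ 2*(k:ℤ)*(l:ℤ) := by nlinarith
    apply F_eq_zero
    · obtain ⟨c, hc⟩ := hpar
      exact ⟨-c - (k:ℤ)*(l:ℤ), by push_cast; linarith⟩
    · left; push_cast; linarith
  unfold Sf
  rw [Finset.sum_eq_zero z1, Finset.sum_eq_zero z2]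
  split_ifs with h
  · subst h
    simp [F, ibinom]
  · have hm0 : 0 < m := by omega
    rw [F_eq_zero (n := 0) (by simpa using hpar.neg_right) (by left; push_cast; omega)]
    ring

lemma lt_div_succ_mul (a b : ℕ) (hb : 0 < b) : a < (a / b + 1) * b := by
  rw [add_mul, one_mul]
  exact Nat.lt_div_mul_add hb

lemma sum_ext_lo (l N B : ℕ) (hl : 2 ≤ l) (m : ℤ) (hm : m ≤ (l:ℤ) - 2)
    (hpar : (2:ℤ) ∣ ((N:ℤ) - m)) (hB : (N + l)/(2*l) ≤ B) :
    ∑ k ∈ Finset.Icc 1 B, F (m - 2 * (k:ℤ) * (l:ℤ)) N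
      = ∑ k ∈ Finset.Icc 1 ((N + l)/(2*l)), F (m - 2 * (k:ℤ) * (l:ℤ)) N := by
  symm
  apply Finset.sum_subset (Finset.Icc_subset_Icc_right hB)
  intro k hk hk2
  have h1 : (N + l)/(2*l) < k := by
    simp only [Finset.mem_Icc] at hk hk2
    omega
  have key : N + l < ((N + l)/(2*l) + 1) * (2*l) :=
    lt_div_succ_mul _ _ (by omega)
  have h2 : N + l < k * (2*l) := lt_of_lt_of_le key (Nat.mul_le_mul_right _ (by omega))
  have h2' : ((N:ℤ)) + (l:ℤ) < (k:ℤ) * (2*(l:ℤ)) := by exact_mod_cast h2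
  apply F_eq_zero
  · obtain ⟨c, hc⟩ := hpar
    exact ⟨c + (k:ℤ)*(l:ℤ), by linarith⟩
  · right; linarith

lemma sum_ext_hi (l N B : ℕ) (hl : 2 ≤ l) (m : ℤ) (hm : 0 ≤ m)
    (hpar : (2:ℤ) ∣ ((N:ℤ) - m)) (hB : N/(2*l) ≤ B) :
    ∑ k ∈ Finset.Icc 1 B, F (m + 2 * (k:ℤ) * (l:ℤ)) N
      = ∑ k ∈ Finset.Icc 1 (N/(2*l)), F (m + 2 * (k:ℤ) * (l:ℤ)) N := by
  symm
  apply Finset.sum_subset (Finset.Icc_subset_Icc_right hB)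
  intro k hk hk2
  have h1 : N/(2*l) < k := by
    simp only [Finset.mem_Icc] at hk hk2
    omega
  have key : N < (N/(2*l) + 1) * (2*l) := lt_div_succ_mul _ _ (by omega)
  have h2 : N < k * (2*l) := lt_of_lt_of_le key (Nat.mul_le_mul_right _ (by omega))
  have h2' : ((N:ℤ)) < (k:ℤ) * (2*(l:ℤ)) := by exact_mod_cast h2
  apply F_eq_zero
  · obtain ⟨c, hc⟩ := hpar
    exact ⟨c - (k:ℤ)*(l:ℤ), by linarith⟩
  · left; linarith

lemma main_count (l : ℕ) (hl : 2 ≤ l) :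
    ∀ (N : ℕ) (m : ℤ) (B : ℕ), N ≤ B → -1 ≤ m → m ≤ (l:ℤ) - 1 →
      (2:ℤ) ∣ ((N:ℤ) - m) → ((Good l N m).card : ℤ) = Sf l m N B := by
  intro N
  induction N with
  | zero =>
    intro m B hB hm1 hm2 hpar
    rw [Good_zero_card hl, Sf_zero l hl m B hm1 hm2 (by omega)]
  | succ N ih =>
    intro m B hB hm1 hm2 hpar
    by_cases hs : 0 ≤ m ∧ m ≤ (l:ℤ) - 2
    · rw [Good_succ_card hs]
      push_cast
      rw [ih (m-1) B (by omega) (by omega) (by omega) (by omega),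
          ih (m+1) B (by omega) (by omega) (by omega) (by omega),
          ← Sf_rec l m N B (by omega)]
    · have hcases : m = -1 ∨ m = (l:ℤ) - 1 := by omega
      rw [Good_empty hs]
      simp only [Finset.card_empty, Nat.cast_zero]
      rcases hcases with rfl | rfl
      · exact (Sf_left l (N+1) B (by omega)).symm
      · exact (Sf_right l (N+1) B hl (by omega) (by omega)).symm

/-- For `l ≥ 2` and `0 ≤ M ≤ l-2`, the number of lattice paths from `(0,0)` to `(M,N)` confined
to the strip `0 ≤ x ≤ l-2` equals
`F M N + Σ_{k=1}^{⌊N/(2l)+1/2⌋} F (M-2kl) N + Σ_{k=1}^{⌊N/(2l)⌋} F (M+2kl) N`. -/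
theorem strip_path_count (l M N : ℕ) (hl : 2 ≤ l) (hM : M ≤ l - 2)
    (h2 : N % 2 = M % 2) :
    (Nat.card {s : Fin N → Bool //
        pathPos s N = M ∧ ∀ k : ℕ, 0 ≤ pathPos s k ∧ pathPos s k ≤ (l : ℤ) - 2} : ℤ) =
      F M N + ∑ k ∈ Finset.Icc 1 ((N + l) / (2 * l)), F ((M : ℤ) - 2 * k * l) N
        + ∑ k ∈ Finset.Icc 1 (N / (2 * l)), F ((M : ℤ) + 2 * k * l) N := by
  have hM2 : M + 2 ≤ l := by omega
  have hpar : (2:ℤ) ∣ ((N:ℤ) - (M:ℤ)) := by omega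
  have hK1 : (N + l)/(2*l) ≤ N := by
    have h1 : (N + l)/(2*l) < N + 1 := by
      rw [Nat.div_lt_iff_lt_mul (by omega)]
      nlinarith
    omega
  have hK2 : N/(2*l) ≤ N := Nat.div_le_self _ _
  rw [natCard_eq_good l N (M:ℤ), main_count l hl N (M:ℤ) N le_rfl (by omega) (by omega) hpar]
  unfold Sf
  rw [sum_ext_lo l N N hl (M:ℤ) (by omega) hpar hK1,
      sum_ext_hi l N N hl (M:ℤ) (by omega) hpar hK2]
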